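/- Let T⁰, T⁻¹ be finitely generated abelian groups and N : T⁰ → T⁻¹ a homomorphism such that N ⊗ ℚ : T⁰ ⊗ ℚ → T⁻¹ ⊗ ℚ is injective. Set D⁰ = T⁰ ⊗_ℤ K₀ and D⁻¹ = T⁻¹ ⊗_ℤ K₀, with σ acting as 1⊗σ and N extended K₀-linearly. Then the assignment u ↦ class of (0, u⊗1) induces an isomorphism of ℚ_p-vector spaces (T⁻¹/N T⁰) ⊗_ℤ ℚ_p → {(x,y) ∈ D⁰ ⊕ D⁻¹ : N(x) = (σ−1)(y)} / {((σ−1)(z), N(z)) : z ∈ D⁰}. -/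

import Mathlib

open TensorProduct

/-- `K₀`: the fraction field of the ring of `p`-typical Witt vectors of the finite
field `𝔽_q` with `q = p^f` elements. -/
abbrev K0 (p f : ℕ) [Fact p.Prime] : Type :=
  FractionRing (WittVector p (GaloisField p f))

/-- `ℚ_p`, realized as the fraction field of `W(𝔽_p)`. -/
abbrev Qp (p : ℕ) [Fact p.Prime] : Type :=
  FractionRing (WittVector p (ZMod p))

/-- The Frobenius `σ` of `K₀`, induced by the Witt vector Frobenius of `W(𝔽_q)`. -/
noncomputable def sigma (p f : ℕ) [Fact p.Prime] : K0 p f ≃+* K0 p f :=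
  WittVector.FractionRing.frobenius p (GaloisField p f)

/-- The embedding `ℚ_p → K₀` induced by `W(𝔽_p) → W(𝔽_q)`. -/
noncomputable def iota (p f : ℕ) [Fact p.Prime] : Qp p →+* K0 p f :=
  IsFractionRing.lift
    (g := (algebraMap (WittVector p (GaloisField p f)) (K0 p f)).comp
      (WittVector.map (algebraMap (ZMod p) (GaloisField p f))))
    (by
      rw [RingHom.coe_comp]
      exact Function.Injective.comp (IsFractionRing.injective _ _)
        (WittVector.map_injective _ (RingHom.injective _)))

/-- `σ` as a `ℤ`-linear endomorphism of `K₀`. -/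
noncomputable def sigmaLin (p f : ℕ) [Fact p.Prime] : K0 p f →ₗ[ℤ] K0 p f :=
  AddMonoidHom.toIntLinearMap (sigma p f).toRingHom.toAddMonoidHom

/-- `ι : ℚ_p → K₀` as a `ℤ`-linear map. -/
noncomputable def iotaLin (p f : ℕ) [Fact p.Prime] : Qp p →ₗ[ℤ] K0 p f :=
  AddMonoidHom.toIntLinearMap (iota p f).toAddMonoidHom

/-- The `ℤ`-linear endomorphism `a ↦ pⁱ·σ(a)` of `K₀` (with `pⁱ ∈ K₀` the `zpow`). -/
noncomputable def twist (p f : ℕ) [Fact p.Prime] (i : ℤ) : K0 p f →ₗ[ℤ] K0 p f :=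
  ((p : K0 p f) ^ i) • sigmaLin p f

section Stmt7

variable (p f : ℕ) [Fact p.Prime] (T0 Tm1 : Type) [AddCommGroup T0] [AddCommGroup Tm1]
  (N : T0 →+ Tm1)

/-- The group of cocycles `{(x,y) ∈ D⁰ ⊕ D⁻¹ : N(x) = (σ−1)(y)}`. -/
noncomputable def cocycles :
    AddSubgroup ((T0 ⊗[ℤ] K0 p f) × (Tm1 ⊗[ℤ] K0 p f)) where
  carrier := {z | TensorProduct.map N.toIntLinearMap (LinearMap.id : K0 p f →ₗ[ℤ] K0 p f) z.1
      = TensorProduct.map (LinearMap.id : Tm1 →ₗ[ℤ] Tm1) (sigmaLin p f) z.2 - z.2}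
  zero_mem' := by simp
  add_mem' := by
    intro a b ha hb
    simp only [Set.mem_setOf_eq, Prod.fst_add, Prod.snd_add, map_add] at *
    rw [ha, hb]; abel
  neg_mem' := by
    intro a ha
    simp only [Set.mem_setOf_eq, Prod.fst_neg, Prod.snd_neg, map_neg] at *
    rw [ha]; abel

/-- The coboundary map `z ↦ ((σ−1)(z), N(z))`. -/
noncomputable def coboundary :
    (T0 ⊗[ℤ] K0 p f) →+ (T0 ⊗[ℤ] K0 p f) × (Tm1 ⊗[ℤ] K0 p f) where
  toFun z := (TensorProduct.map (LinearMap.id : T0 →ₗ[ℤ] T0) (sigmaLin p f) z - z,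
    TensorProduct.map N.toIntLinearMap (LinearMap.id : K0 p f →ₗ[ℤ] K0 p f) z)
  map_zero' := by simp
  map_add' a b := by
    simp only [map_add, Prod.mk_add_mk]
    exact Prod.ext (by abel) rfl

end Stmt7


/-!
Averaging over the powers of `σ` splits `K₀` over `ℤ` into `ι(ℚ_p)` and `(σ - 1)K₀`. Since
`σ^f = 1` and `f` is invertible in `K₀`, the operators `P = f⁻¹ ∑_{i<f} σⁱ` and
`G = -f⁻¹ ∑_{i<f} ∑_{j<i} σʲ` satisfy `G(σ - 1) = 1 - P` and `(σ - 1)P = 0`, and the `σ`-fixed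
elements of `K₀` are exactly `ι(ℚ_p)` (write `a = w / pᵐ` with `w` a Witt vector; `σ w = w`
forces the coordinates of `w` into `𝔽_p`). So `P = ι ∘ r` for a retraction `r : K₀ → ℚ_p`, and
these operator identities survive `M ⊗ -` for every abelian group `M`: the `σ`-invariants of
`M ⊗ K₀` are `M ⊗ ℚ_p`, and `y ≡ ι(r y)` modulo `(σ - 1)`.

Hence `t ↦ [(0, ι t)]` maps `T⁻¹ ⊗ ℚ_p` onto `H¹`: a cocycle `(x, y)` differs from `(0, ι(r y))`
by the coboundary of `G x`, because `N ⊗ K₀` is injective (`K₀` is flat over `ℚ`). Its kernel is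
`N(T⁰ ⊗ ℚ_p)`, since a coboundary `(0, N z)` has `σ z = z`. Right exactness of `- ⊗ ℚ_p`
identifies the same quotient of `T⁻¹ ⊗ ℚ_p` with `(T⁻¹/N T⁰) ⊗ ℚ_p`.
-/

theorem exists_algebraMap_eq_of_pow_eq_self {p : ℕ} [Fact p.Prime] {F : Type*} [Field F]
    [CharP F p] [Algebra (ZMod p) F] {x : F} (hx : x ^ p = x) :
    ∃ a : ZMod p, algebraMap (ZMod p) F a = x := by
  obtain ⟨n, rfl⟩ := (mem_bot_iff_intCast p F).1 ((Subfield.mem_bot_iff_pow_eq_self F p).2 hx)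
  exact ⟨n, map_intCast _ n⟩

namespace WittVector

variable {p : ℕ} [Fact p.Prime] {k : Type*} [Field k] [CharP k p]

theorem exists_map_eq_of_frobenius_eq_self [Algebra (ZMod p) k] {x : WittVector p k}
    (hx : frobenius x = x) : ∃ y : WittVector p (ZMod p), map (algebraMap (ZMod p) k) y = x := by
  have hcoeff (n : ℕ) : ∃ a : ZMod p, algebraMap (ZMod p) k a = x.coeff n :=
    exists_algebraMap_eq_of_pow_eq_self <| by
      simpa [coeff_frobenius_charP] using congr_arg (coeff · n) hx
  choose a ha using hcoeff
  exact ⟨mk p a, ext fun n => by simp [map_coeff, ha]⟩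

theorem exists_eq_algebraMap_div_pow [PerfectRing k p] (a : FractionRing (WittVector p k)) :
    ∃ (w : WittVector p k) (m : ℕ),
      a = algebraMap _ _ w / (p : FractionRing (WittVector p k)) ^ m := by
  obtain ⟨x, y, hy, rfl⟩ := IsFractionRing.div_surjective (A := WittVector p k) a
  obtain ⟨m, u, rfl⟩ := exists_eq_pow_p_mul' y (nonZeroDivisors.ne_zero hy)
  refine ⟨x * ↑u⁻¹, m, ?_⟩
  have hu : algebraMap (WittVector p k) (FractionRing (WittVector p k)) ↑u ≠ 0 :=
    (u.isUnit.map _).ne_zero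
  rw [map_mul, map_mul, map_pow, map_natCast, map_units_inv]
  field_simp

theorem iterate_frobenius_eq_self {f : ℕ} (hf : f ≠ 0) (x : WittVector p (GaloisField p f)) :
    frobenius^[f] x = x := by
  have : Fintype (GaloisField p f) := Fintype.ofFinite _
  ext n
  rw [iterate_frobenius_coeff, ← GaloisField.card p f hf, Nat.card_eq_fintype_card,
    FiniteField.pow_card]

end WittVector

section Averaging

open Finset

variable {R : Type*} [Ring R] (s : R) (n : ℕ) [Invertible (n : R)]

noncomputable def averageOp : R := ⅟(n : R) * ∑ i ∈ range n, s ^ i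

noncomputable def averageHomotopy : R := -(⅟(n : R) * ∑ i ∈ range n, ∑ j ∈ range i, s ^ j)

omit [Invertible (n : R)] in
theorem sum_geom_sum_mul_sub_one :
    (∑ i ∈ range n, ∑ j ∈ range i, s ^ j) * (s - 1) = ∑ i ∈ range n, s ^ i - n := by
  rw [sum_mul]
  simp_rw [geom_sum_mul]
  simp [sum_sub_distrib]

theorem averageHomotopy_mul_sub_one : averageHomotopy s n * (s - 1) = 1 - averageOp s n := by
  rw [averageHomotopy, averageOp, neg_mul, mul_assoc, sum_geom_sum_mul_sub_one]
  simp [mul_sub]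

theorem sub_one_mul_averageOp (h : s ^ n = 1) : (s - 1) * averageOp s n = 0 := by
  rw [averageOp, ← mul_assoc, ((Nat.cast_commute (α := R) n (s - 1)).symm.invOf_right).eq,
    mul_assoc, mul_geom_sum, h, sub_self, mul_zero]

end Averaging

instance {V : Type*} [AddCommGroup V] [Module ℚ V] (n : ℕ) [NeZero n] :
    Invertible (n : Module.End ℤ V) where
  invOf := (n : ℚ)⁻¹ • 1
  invOf_mul_self := by ext v; simp [← Nat.cast_smul_eq_nsmul ℚ, smul_smul]
  mul_invOf_self := by ext v; simp [← Nat.cast_smul_eq_nsmul ℚ, smul_smul]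

open Function in
theorem LinearMap.rTensor_injective_of_rTensor_rat_injective {T T' V : Type*} [AddCommGroup T]
    [AddCommGroup T'] [AddCommGroup V] [Module ℚ V] (L : T →ₗ[ℤ] T')
    (hL : Injective (L.rTensor ℚ)) : Injective (L.rTensor V) := by
  rw [← LinearMap.lTensor_inj_iff_rTensor_inj] at hL ⊢
  have hflat : Injective (AlgebraTensorModule.lTensor ℚ V (AlgebraTensorModule.lTensor ℚ ℚ L)) :=
    Module.Flat.lTensor_preserves_injective_linearMap _ hL
  refine Injective.of_comp_right (g := AlgebraTensorModule.cancelBaseChange ℤ ℚ ℚ V T) ?_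
    (LinearEquiv.surjective _)
  change Injective ⇑(AlgebraTensorModule.lTensor ℚ V L ∘ₗ
    (AlgebraTensorModule.cancelBaseChange ℤ ℚ ℚ V T).toLinearMap)
  rw [AlgebraTensorModule.lTensor_comp_cancelBaseChange]
  exact (AlgebraTensorModule.cancelBaseChange ℤ ℚ ℚ V T').injective.comp hflat

theorem LinearMap.rTensor_lTensor_comm {R M N P Q : Type*} [CommSemiring R] [AddCommMonoid M]
    [AddCommMonoid N] [AddCommMonoid P] [AddCommMonoid Q] [Module R M] [Module R N] [Module R P]
    [Module R Q] (f : M →ₗ[R] P) (g : N →ₗ[R] Q) (x : M ⊗[R] N) :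
    f.rTensor Q (g.lTensor M x) = g.lTensor P (f.rTensor N x) := by
  rw [← LinearMap.comp_apply, rTensor_comp_lTensor, ← lTensor_comp_rTensor, LinearMap.comp_apply]

theorem exists_addEquiv_apply_eq_of_ker_eq {A B C : Type*} [AddGroup A] [AddGroup B] [AddGroup C]
    {g : A →+ B} {h : A →+ C} (hg : Function.Surjective g) (hh : Function.Surjective h)
    (hker : g.ker = h.ker) : ∃ e : B ≃+ C, ∀ a, e (g a) = h a := by
  refine ⟨(QuotientAddGroup.quotientKerEquivOfSurjective g hg).symm.trans
    ((QuotientAddGroup.quotientAddEquivOfEq hker).trans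
      (QuotientAddGroup.quotientKerEquivOfSurjective h hh)), fun a => ?_⟩
  have hga : (QuotientAddGroup.quotientKerEquivOfSurjective g hg).symm (g a) = a :=
    (AddEquiv.symm_apply_eq _).2 rfl
  rw [AddEquiv.trans_apply, hga]
  rfl

instance (p f : ℕ) [Fact p.Prime] : CharZero (WittVector p (GaloisField p f)) :=
  charZero_of_injective_ringHom
    (f := (WittVector.map (algebraMap (ZMod p) (GaloisField p f))).comp
      (WittVector.equiv p).symm.toRingHom)
    ((WittVector.map_injective _ (RingHom.injective _)).comp (WittVector.equiv p).symm.injective)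

instance (p f : ℕ) [Fact p.Prime] : CharZero (K0 p f) := IsFractionRing.charZero _

section Frobenius

variable {p f : ℕ} [Fact p.Prime]

theorem sigma_algebraMap (x : WittVector p (GaloisField p f)) :
    sigma p f (algebraMap _ _ x) = algebraMap _ _ (WittVector.frobenius x) :=
  IsFractionRing.ringEquivOfRingEquiv_algebraMap (WittVector.frobeniusEquiv p (GaloisField p f)) x

theorem iota_algebraMap (x : WittVector p (ZMod p)) :
    iota p f (algebraMap _ _ x) =
      algebraMap _ _ (WittVector.map (algebraMap (ZMod p) (GaloisField p f)) x) :=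
  IsFractionRing.lift_algebraMap _ _

theorem sigma_iota (c : Qp p) : sigma p f (iota p f c) = iota p f c := by
  have : (sigma p f : K0 p f →+* K0 p f).comp (iota p f) = iota p f := by
    refine IsLocalization.ringHom_ext (nonZeroDivisors (WittVector p (ZMod p)))
      (RingHom.ext fun x => ?_)
    simp only [RingHom.comp_apply, RingEquiv.coe_toRingHom, iota_algebraMap, sigma_algebraMap]
    congr 1
    ext n
    simp [WittVector.coeff_frobenius_charP, WittVector.map_coeff, ← map_pow, ZMod.pow_card]
  exact DFunLike.congr_fun this c

theorem sigmaLin_pow_eq_one (hf : f ≠ 0) : sigmaLin p f ^ f = 1 := by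
  have : (sigma p f : K0 p f →+* K0 p f) ^ f = RingHom.id _ := by
    refine IsLocalization.ringHom_ext (nonZeroDivisors (WittVector p (GaloisField p f)))
      (RingHom.ext fun x => ?_)
    have hsemi : Function.Semiconj (algebraMap _ (K0 p f)) WittVector.frobenius (sigma p f) :=
      fun x => (sigma_algebraMap x).symm
    rw [RingHom.comp_apply, RingHom.coe_pow, RingEquiv.coe_toRingHom, ← hsemi.iterate_right,
      WittVector.iterate_frobenius_eq_self hf, RingHom.id_comp]
  ext a
  have h : (sigma p f)^[f] a = a := by simpa [RingHom.coe_pow] using DFunLike.congr_fun this a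
  rw [Module.End.pow_apply, Module.End.one_apply]
  exact h

theorem iotaLin_injective : Function.Injective (iotaLin p f) := (iota p f).injective

theorem sigmaLin_comp_iotaLin : sigmaLin p f ∘ₗ iotaLin p f = iotaLin p f :=
  LinearMap.ext sigma_iota

theorem exists_iota_eq_of_sigma_eq_self {a : K0 p f} (ha : sigma p f a = a) :
    ∃ c : Qp p, iota p f c = a := by
  obtain ⟨w, m, rfl⟩ := WittVector.exists_eq_algebraMap_div_pow a
  have hp : (p : K0 p f) ^ m ≠ 0 := pow_ne_zero _ (by exact_mod_cast (Fact.out : p.Prime).ne_zero)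
  have hw : WittVector.frobenius w = w := by
    apply IsFractionRing.injective (WittVector p (GaloisField p f)) (K0 p f)
    rw [← sigma_algebraMap]
    simpa [map_div₀, hp] using ha
  obtain ⟨y, rfl⟩ := WittVector.exists_map_eq_of_frobenius_eq_self hw
  exact ⟨algebraMap _ _ y / (p : Qp p) ^ m, by simp [map_div₀, iota_algebraMap]⟩

end Frobenius

section Retraction

variable {p f : ℕ} [Fact p.Prime] [NeZero f]

theorem sigma_averageOp (a : K0 p f) :
    sigma p f (averageOp (sigmaLin p f) f a) = averageOp (sigmaLin p f) f a :=
  sub_eq_zero.1 <| LinearMap.congr_fun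
    (sub_one_mul_averageOp (sigmaLin p f) f (sigmaLin_pow_eq_one (NeZero.ne f))) a

variable (p f) in
noncomputable def retraction : K0 p f →ₗ[ℤ] Qp p :=
  LinearMap.codRestrictOfInjective (averageOp (sigmaLin p f) f) (iotaLin p f) iotaLin_injective
    fun a => LinearMap.mem_range.2 (exists_iota_eq_of_sigma_eq_self (sigma_averageOp a))

theorem averageHomotopy_mul_sigmaLin_sub_one :
    averageHomotopy (sigmaLin p f) f * (sigmaLin p f - 1) = 1 - iotaLin p f ∘ₗ retraction p f := by
  rw [averageHomotopy_mul_sub_one, retraction, LinearMap.codRestrictOfInjective_comp]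

theorem retraction_comp_iotaLin : retraction p f ∘ₗ iotaLin p f = LinearMap.id := by
  ext c
  apply iotaLin_injective
  have h := LinearMap.congr_fun averageHomotopy_mul_sigmaLin_sub_one (iotaLin p f c)
  simp only [Module.End.mul_apply, LinearMap.sub_apply, Module.End.one_apply,
    ← LinearMap.comp_apply (sigmaLin p f), sigmaLin_comp_iotaLin, sub_self, map_zero] at h
  exact (sub_eq_zero.1 h.symm).symm

end Retraction

section Tensor

variable {p f : ℕ} [Fact p.Prime] (M : Type*) [AddCommGroup M]

theorem lTensor_sigmaLin_lTensor_iotaLin (t : M ⊗[ℤ] Qp p) :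
    LinearMap.lTensor M (sigmaLin p f) (LinearMap.lTensor M (iotaLin p f) t) =
      LinearMap.lTensor M (iotaLin p f) t := by
  rw [← LinearMap.lTensor_comp_apply, sigmaLin_comp_iotaLin]

variable [NeZero f]

theorem lTensor_iotaLin_injective : Function.Injective (LinearMap.lTensor M (iotaLin p f)) := by
  refine Function.LeftInverse.injective (g := LinearMap.lTensor M (retraction p f)) fun t => ?_
  rw [← LinearMap.lTensor_comp_apply, retraction_comp_iotaLin, LinearMap.lTensor_id_apply]

theorem lTensor_averageHomotopy_sigmaLin_sub (y : M ⊗[ℤ] K0 p f) :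
    LinearMap.lTensor M (averageHomotopy (sigmaLin p f) f)
        (LinearMap.lTensor M (sigmaLin p f) y - y) =
      y - LinearMap.lTensor M (iotaLin p f) (LinearMap.lTensor M (retraction p f) y) := by
  have h := congr_arg (fun g => LinearMap.lTensor M g y) averageHomotopy_mul_sigmaLin_sub_one
  simpa [LinearMap.lTensor_sub, LinearMap.lTensor_mul, LinearMap.lTensor_comp,
    Module.End.one_eq_id] using h

theorem exists_lTensor_iotaLin_eq_of_fixed {y : M ⊗[ℤ] K0 p f}
    (hy : LinearMap.lTensor M (sigmaLin p f) y = y) :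
    ∃ t, LinearMap.lTensor M (iotaLin p f) t = y :=
  ⟨_, (sub_eq_zero.1 (by rw [← lTensor_averageHomotopy_sigmaLin_sub, hy, sub_self, map_zero])).symm⟩

end Tensor

section H1

variable {p f : ℕ} [Fact p.Prime] {T0 Tm1 : Type} [AddCommGroup T0] [AddCommGroup Tm1]
  {N : T0 →+ Tm1}

theorem mem_cocycles_iff {z : (T0 ⊗[ℤ] K0 p f) × (Tm1 ⊗[ℤ] K0 p f)} :
    z ∈ cocycles p f T0 Tm1 N ↔
      N.toIntLinearMap.rTensor _ z.1 = (sigmaLin p f).lTensor Tm1 z.2 - z.2 :=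
  Iff.rfl

variable (p f N) in
abbrev H1 : Type :=
  cocycles p f T0 Tm1 N ⧸ (coboundary p f T0 Tm1 N).range.addSubgroupOf (cocycles p f T0 Tm1 N)

theorem H1.mk_eq_zero_iff {x : T0 ⊗[ℤ] K0 p f} {y : Tm1 ⊗[ℤ] K0 p f}
    (hxy : (x, y) ∈ cocycles p f T0 Tm1 N) :
    (QuotientAddGroup.mk ⟨(x, y), hxy⟩ : H1 p f N) = 0 ↔
      ∃ w, (sigmaLin p f).lTensor T0 w - w = x ∧ N.toIntLinearMap.rTensor _ w = y := by
  rw [QuotientAddGroup.eq_zero_iff, AddSubgroup.mem_addSubgroupOf, AddMonoidHom.mem_range]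
  simp only [coboundary, AddMonoidHom.coe_mk, ZeroHom.coe_mk, Prod.ext_iff]
  rfl

theorem zero_lTensor_iotaLin_mem_cocycles (t : Tm1 ⊗[ℤ] Qp p) :
    ((0 : T0 ⊗[ℤ] K0 p f), (iotaLin p f).lTensor Tm1 t) ∈ cocycles p f T0 Tm1 N := by
  rw [mem_cocycles_iff, map_zero, lTensor_sigmaLin_lTensor_iotaLin, sub_self]

variable (p f N) in
noncomputable def tensorQpToH1 : Tm1 ⊗[ℤ] Qp p →+ H1 p f N :=
  (QuotientAddGroup.mk' _).comp <|
    (((AddMonoidHom.inr _ _).comp ((iotaLin p f).lTensor Tm1).toAddMonoidHom).codRestrict _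
      zero_lTensor_iotaLin_mem_cocycles)

theorem tensorQpToH1_apply (t : Tm1 ⊗[ℤ] Qp p) :
    tensorQpToH1 p f N t = QuotientAddGroup.mk ⟨(0, (iotaLin p f).lTensor Tm1 t),
      zero_lTensor_iotaLin_mem_cocycles t⟩ :=
  rfl

variable [NeZero f]

theorem tensorQpToH1_eq_zero_iff (t : Tm1 ⊗[ℤ] Qp p) :
    tensorQpToH1 p f N t = 0 ↔ t ∈ LinearMap.range (N.toIntLinearMap.rTensor (Qp p)) := by
  rw [tensorQpToH1_apply, H1.mk_eq_zero_iff, LinearMap.mem_range]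
  constructor
  · rintro ⟨w, hfixed, hw⟩
    obtain ⟨v, rfl⟩ := exists_lTensor_iotaLin_eq_of_fixed T0 (sub_eq_zero.1 hfixed)
    exact ⟨v, lTensor_iotaLin_injective Tm1 (by rw [← hw, LinearMap.rTensor_lTensor_comm])⟩
  · rintro ⟨v, rfl⟩
    exact ⟨(iotaLin p f).lTensor T0 v, by rw [lTensor_sigmaLin_lTensor_iotaLin, sub_self],
      LinearMap.rTensor_lTensor_comm _ _ _⟩

theorem H1.mk_eq_tensorQpToH1_retraction
    (hN : Function.Injective (N.toIntLinearMap.rTensor (K0 p f))) (z : cocycles p f T0 Tm1 N) :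
    (QuotientAddGroup.mk z : H1 p f N) =
      tensorQpToH1 p f N ((retraction p f).lTensor Tm1 z.1.2) := by
  obtain ⟨⟨x, y⟩, hxy⟩ := z
  set t := (retraction p f).lTensor Tm1 y
  set G := averageHomotopy (sigmaLin p f) f
  have hG : N.toIntLinearMap.rTensor _ (G.lTensor T0 x) = y - (iotaLin p f).lTensor Tm1 t := by
    rw [LinearMap.rTensor_lTensor_comm, mem_cocycles_iff.1 hxy,
      lTensor_averageHomotopy_sigmaLin_sub]
  rw [tensorQpToH1_apply, ← sub_eq_zero, ← QuotientAddGroup.mk_sub]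
  refine (H1.mk_eq_zero_iff (sub_mem hxy (zero_lTensor_iotaLin_mem_cocycles t))).2
    ⟨G.lTensor T0 x, hN ?_, hG⟩
  change _ = N.toIntLinearMap.rTensor _ (x - 0)
  rw [map_sub, LinearMap.rTensor_lTensor_comm, hG, map_sub, lTensor_sigmaLin_lTensor_iotaLin,
    sub_zero, mem_cocycles_iff.1 hxy]
  abel

theorem tensorQpToH1_surjective
    (hN : Function.Injective (N.toIntLinearMap.rTensor (K0 p f))) :
    Function.Surjective (tensorQpToH1 p f N) := by
  rintro ⟨z⟩
  exact ⟨_, (H1.mk_eq_tensorQpToH1_retraction hN z).symm⟩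

end H1

theorem quotient_tensor_Qp_equiv_H1_general (p f : ℕ) [Fact p.Prime] (hf : f ≠ 0)
    (T0 Tm1 : Type) [AddCommGroup T0] [AddCommGroup Tm1]
    (N : T0 →+ Tm1)
    (hN : Function.Injective
      (TensorProduct.map N.toIntLinearMap (LinearMap.id : ℚ →ₗ[ℤ] ℚ))) :
    ∃ φ : ((Tm1 ⧸ N.range) ⊗[ℤ] Qp p) ≃+
        (cocycles p f T0 Tm1 N ⧸
          ((coboundary p f T0 Tm1 N).range.addSubgroupOf (cocycles p f T0 Tm1 N))),
      ∀ (u : Tm1) (c : Qp p)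
        (hu : ((0 : T0 ⊗[ℤ] K0 p f), u ⊗ₜ[ℤ] iota p f c) ∈ cocycles p f T0 Tm1 N),
        φ ((QuotientAddGroup.mk u : Tm1 ⧸ N.range) ⊗ₜ[ℤ] c)
          = QuotientAddGroup.mk ⟨((0 : T0 ⊗[ℤ] K0 p f), u ⊗ₜ[ℤ] iota p f c), hu⟩ := by
  have : NeZero f := ⟨hf⟩
  let q : Tm1 →ₗ[ℤ] Tm1 ⧸ N.range := (QuotientAddGroup.mk' N.range).toIntLinearMap
  have hq : Function.Surjective q := QuotientAddGroup.mk'_surjective _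
  have hexact : Function.Exact (N.toIntLinearMap.rTensor (Qp p)) (q.rTensor (Qp p)) :=
    rTensor_exact _ (fun y => QuotientAddGroup.eq_zero_iff y) hq
  obtain ⟨e, he⟩ := exists_addEquiv_apply_eq_of_ker_eq (g := (q.rTensor (Qp p)).toAddMonoidHom)
    (LinearMap.rTensor_surjective _ hq)
    (tensorQpToH1_surjective (LinearMap.rTensor_injective_of_rTensor_rat_injective _ hN))
    (AddSubgroup.ext fun t => (hexact t).trans (tensorQpToH1_eq_zero_iff (f := f) t).symm)
  exact ⟨e, fun u c _ => he (u ⊗ₜ c)⟩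

/-- for `N : T⁰ → T⁻¹` with `N ⊗ ℚ` injective, the assignment
`u ↦ class of (0, u⊗1)` induces an isomorphism of `ℚ_p`-vector spaces
`(T⁻¹/N T⁰) ⊗ ℚ_p ≅ {(x,y) : N(x) = (σ−1)(y)}/{((σ−1)z, Nz)}` (the `ℚ_p`-structure being
encoded by the formula `mk u ⊗ c ↦ class of (0, u ⊗ ι(c))` on simple tensors). -/
theorem quotient_tensor_Qp_equiv_H1 (p f : ℕ) [Fact p.Prime] (hf : f ≠ 0)
    (T0 Tm1 : Type) [AddCommGroup T0] [AddCommGroup Tm1]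
    [AddGroup.FG T0] [AddGroup.FG Tm1] (N : T0 →+ Tm1)
    (hN : Function.Injective
      (TensorProduct.map N.toIntLinearMap (LinearMap.id : ℚ →ₗ[ℤ] ℚ))) :
    ∃ φ : ((Tm1 ⧸ N.range) ⊗[ℤ] Qp p) ≃+
        (cocycles p f T0 Tm1 N ⧸
          ((coboundary p f T0 Tm1 N).range.addSubgroupOf (cocycles p f T0 Tm1 N))),
      ∀ (u : Tm1) (c : Qp p)
        (hu : ((0 : T0 ⊗[ℤ] K0 p f), u ⊗ₜ[ℤ] iota p f c) ∈ cocycles p f T0 Tm1 N),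
        φ ((QuotientAddGroup.mk u : Tm1 ⧸ N.range) ⊗ₜ[ℤ] c)
          = QuotientAddGroup.mk ⟨((0 : T0 ⊗[ℤ] K0 p f), u ⊗ₜ[ℤ] iota p f c), hu⟩ :=
  quotient_tensor_Qp_equiv_H1_general p f hf T0 Tm1 N hN
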